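/- Let R be an ℕ-graded domain R = ⊕_{m≥0} I_m W^m with I_m ⊆ S := ℂ[x,y] and I_m = (xy, x^m, y^m) for m ≥ 1, I₀ = S. Then for every finite set of homogeneous elements f₁,…,f_r ∈ R of positive degrees d₁,…,d_r, there exists m > max(d_i) such that xy·W^m is not in the S-subalgebra generated by f₁,…,f_r. -/
import Mathlib

open MvPolynomial Polynomial

/-- `I 0 = S = ℂ[x,y]` and, for `m ≥ 1`, `I m = (xy, x^m, y^m)`. -/
noncomputable def Igr : ℕ → Ideal (MvPolynomial (Fin 2) ℂ) := fun m =>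
  if m = 0 then ⊤ else Ideal.span {X 0 * X 1, X 0 ^ m, X 1 ^ m}

/-- The ideal of polynomials all of whose monomials have total degree ≥ 3. -/
noncomputable def Kdeg3 : Ideal (MvPolynomial (Fin 2) ℂ) where
  carrier := {p | ∀ u ∈ p.support, 3 ≤ u 0 + u 1}
  add_mem' := by
    intro p q hp hq u hu
    have := MvPolynomial.support_add (p := p) (q := q) hu
    rcases Finset.mem_union.mp this with h | h
    · exact hp u h
    · exact hq u h
  zero_mem' := by intro u hu; simp at hu
  smul_mem' := by
    intro r p hp u hu
    rw [smul_eq_mul, MvPolynomial.mem_support_iff, MvPolynomial.coeff_mul] at hu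
    obtain ⟨x, hx, hne⟩ := Finset.exists_ne_zero_of_sum_ne_zero hu
    have hw : x.2 ∈ p.support := by
      rw [MvPolynomial.mem_support_iff]
      intro h; rw [h, mul_zero] at hne; exact hne rfl
    have h3 := hp _ hw
    have hsum : x.1 + x.2 = u := Finset.HasAntidiagonal.mem_antidiagonal.mp hx
    have h0 : u 0 = x.1 0 + x.2 0 := by rw [← hsum]; rfl
    have h1 : u 1 = x.1 1 + x.2 1 := by rw [← hsum]; rfl
    omega

lemma mono_mem_K (u : Fin 2 →₀ ℕ) (a : ℂ) (h : 3 ≤ u 0 + u 1) :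
    MvPolynomial.monomial u a ∈ Kdeg3 := by
  intro v hv
  have := MvPolynomial.support_monomial_subset hv
  simp only [Finset.mem_singleton] at this
  subst this; exact h

lemma xy_notMem_K : X 0 * X 1 ∉ (Kdeg3 : Ideal (MvPolynomial (Fin 2) ℂ)) := by
  intro h
  have hx : (X 0 * X 1 : MvPolynomial (Fin 2) ℂ) =
      MvPolynomial.monomial (Finsupp.single 0 1 + Finsupp.single 1 1) 1 := by
    rw [MvPolynomial.X, MvPolynomial.X, MvPolynomial.monomial_mul, one_mul]
  have hmem : (Finsupp.single 0 1 + Finsupp.single 1 1 : Fin 2 →₀ ℕ) ∈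
      (X 0 * X 1 : MvPolynomial (Fin 2) ℂ).support := by
    rw [hx, MvPolynomial.mem_support_iff, MvPolynomial.coeff_monomial]
    simp
  have := h _ hmem
  simp [Finsupp.single_apply] at this

lemma xayb_mem_K (a b : ℕ) (h : 3 ≤ a + b) :
    (X 0 : MvPolynomial (Fin 2) ℂ) ^ a * X 1 ^ b ∈ Kdeg3 := by
  have : (X 0 : MvPolynomial (Fin 2) ℂ) ^ a * X 1 ^ b =
      MvPolynomial.monomial (Finsupp.single 0 a + Finsupp.single 1 b) 1 := by
    rw [MvPolynomial.X_pow_eq_monomial, MvPolynomial.X_pow_eq_monomial,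
      MvPolynomial.monomial_mul, one_mul]
  rw [this]
  apply mono_mem_K
  simp [Finsupp.single_apply]
  omega

lemma Igr_mul_le_K (a b : ℕ) (ha : 0 < a) (hb : 0 < b) (hab : 3 ≤ a + b) :
    Igr a * Igr b ≤ Kdeg3 := by
  unfold Igr
  rw [if_neg (by omega), if_neg (by omega), Ideal.span_mul_span', Ideal.span_le]
  rintro p ⟨u, hu, v, hv, rfl⟩
  simp only [Set.mem_insert_iff, Set.mem_singleton_iff] at hu hv
  rw [SetLike.mem_coe]
  beta_reduce
  rcases hu with rfl | rfl | rfl <;> rcases hv with rfl | rfl | rfl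
  · have : (X 0 * X 1) * (X 0 * X 1) = (X 0 : MvPolynomial (Fin 2) ℂ)^2 * X 1^2 := by ring
    rw [this]; exact xayb_mem_K _ _ (by omega)
  · have : (X 0 * X 1) * (X 0 ^ b) = (X 0 : MvPolynomial (Fin 2) ℂ)^(b+1) * X 1^1 := by ring
    rw [this]; exact xayb_mem_K _ _ (by omega)
  · have : (X 0 * X 1) * (X 1 ^ b) = (X 0 : MvPolynomial (Fin 2) ℂ)^1 * X 1^(b+1) := by ring
    rw [this]; exact xayb_mem_K _ _ (by omega)
  · have : (X 0 ^ a) * (X 0 * X 1) = (X 0 : MvPolynomial (Fin 2) ℂ)^(a+1) * X 1^1 := by ring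
    rw [this]; exact xayb_mem_K _ _ (by omega)
  · have : (X 0 ^ a) * (X 0 ^ b) = (X 0 : MvPolynomial (Fin 2) ℂ)^(a+b) * X 1^0 := by ring
    rw [this]; exact xayb_mem_K _ _ (by omega)
  · exact xayb_mem_K _ _ (by omega)
  · have : (X 1 ^ a) * (X 0 * X 1) = (X 0 : MvPolynomial (Fin 2) ℂ)^1 * X 1^(a+1) := by ring
    rw [this]; exact xayb_mem_K _ _ (by omega)
  · have : (X 1 ^ a) * (X 0 ^ b) = (X 0 : MvPolynomial (Fin 2) ℂ)^b * X 1^a := by ring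
    rw [this]; exact xayb_mem_K _ _ (by omega)
  · have : (X 1 ^ a) * (X 1 ^ b) = (X 0 : MvPolynomial (Fin 2) ℂ)^0 * X 1^(a+b) := by ring
    rw [this]; exact xayb_mem_K _ _ (by omega)

lemma Igr_mul_le (a b : ℕ) (ha : 0 < a) (hb : 0 < b) :
    Igr a * Igr b ≤ Igr (a + b) := by
  obtain ⟨a', rfl⟩ : ∃ a', a = a' + 1 := ⟨a - 1, by omega⟩
  obtain ⟨b', rfl⟩ : ∃ b', b = b' + 1 := ⟨b - 1, by omega⟩
  unfold Igr
  rw [if_neg (by omega), if_neg (by omega), if_neg (by omega),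
    Ideal.span_mul_span', Ideal.span_le]
  rintro p ⟨u, hu, v, hv, rfl⟩
  simp only [Set.mem_insert_iff, Set.mem_singleton_iff] at hu hv
  rw [SetLike.mem_coe]
  beta_reduce
  have hxy : (X 0 * X 1 : MvPolynomial (Fin 2) ℂ) ∈
      Ideal.span {X 0 * X 1, X 0 ^ (a' + 1 + (b' + 1)), X 1 ^ (a' + 1 + (b' + 1))} :=
    Ideal.subset_span (by simp)
  rcases hu with rfl | rfl | rfl <;> rcases hv with rfl | rfl | rfl
  · exact Ideal.mul_mem_right _ _ hxy
  · exact Ideal.mul_mem_right _ _ hxy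
  · exact Ideal.mul_mem_right _ _ hxy
  · rw [mul_comm (X 0 ^ (a'+1))]; exact Ideal.mul_mem_right _ _ hxy
  · rw [← pow_add]; exact Ideal.subset_span (by simp)
  · have : (X 0 ^ (a'+1)) * (X 1 ^ (b'+1)) =
        (X 0 * X 1 : MvPolynomial (Fin 2) ℂ) * (X 0 ^ a' * X 1 ^ b') := by ring
    rw [this]; exact Ideal.mul_mem_right _ _ hxy
  · rw [mul_comm (X 1 ^ (a'+1))]; exact Ideal.mul_mem_right _ _ hxy
  · have : (X 1 ^ (a'+1)) * (X 0 ^ (b'+1)) =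
        (X 0 * X 1 : MvPolynomial (Fin 2) ℂ) * (X 0 ^ b' * X 1 ^ a') := by ring
    rw [this]; exact Ideal.mul_mem_right _ _ hxy
  · rw [← pow_add]; exact Ideal.subset_span (by simp)

/-- In the graded ring `R = ⊕_{m≥0} I_m W^m ⊆ S[W]` with `S = ℂ[x,y]`,
`I_m = (xy, x^m, y^m)`: for every finite family of homogeneous elements
`f_i = c_i · W^{d_i}` of `R` of positive degrees `d_i` (so `c_i ∈ I_{d_i}`),
there exists `m` larger than all the `d_i` such that `xy · W^m` is not in the
`S`-subalgebra of `S[W]` generated by the `f_i`. -/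
theorem xy_W_pow_not_in_finitely_generated_subalgebra
    (r : ℕ) (c : Fin r → MvPolynomial (Fin 2) ℂ) (d : Fin r → ℕ)
    (hd : ∀ i, 0 < d i) (hc : ∀ i, c i ∈ Igr (d i)) :
    ∃ m : ℕ, (∀ i, d i < m) ∧
      Polynomial.C (X 0 * X 1) * Polynomial.X ^ m ∉
        Algebra.adjoin (MvPolynomial (Fin 2) ℂ)
          (Set.range fun i => Polynomial.C (c i) * Polynomial.X ^ (d i)) := by
  classical
  set m : ℕ := 3 + ∑ i, d i with hm
  have hdm : ∀ i, d i < m := by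
    intro i
    have : d i ≤ ∑ j, d j :=
      Finset.single_le_sum (f := d) (fun j _ => Nat.zero_le _) (Finset.mem_univ i)
    omega
  refine ⟨m, hdm, ?_⟩
  intro hmem
  set T : ℕ → Ideal (MvPolynomial (Fin 2) ℂ) := fun k =>
    if k = 0 then ⊤ else if k < m then Igr k else if k = m then Kdeg3 else ⊤ with hT
  have hTm : T m = Kdeg3 := by simp [hT]; omega
  have hTsmall : ∀ k, k ≠ 0 → k < m → T k = Igr k := by
    intro k h0 hlt; simp [hT, h0, hlt]
  have hTmul : ∀ a b : ℕ, 0 < a → 0 < b →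
      ∀ u ∈ T a, ∀ v ∈ T b, u * v ∈ T (a + b) := by
    intro a b ha hb u hu v hv
    by_cases hbig : m < a + b
    · have : T (a + b) = ⊤ := by
        simp only [hT]
        rw [if_neg (by omega), if_neg (by omega), if_neg (by omega)]
      rw [this]; trivial
    · have hua : u ∈ Igr a := by rwa [hTsmall a (by omega) (by omega)] at hu
      have hvb : v ∈ Igr b := by rwa [hTsmall b (by omega) (by omega)] at hv
      have hmm : u * v ∈ Igr a * Igr b := Ideal.mul_mem_mul hua hvb
      by_cases heq : a + b = m
      · rw [heq, hTm]
        exact Igr_mul_le_K a b ha hb (by omega) hmm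
      · rw [hTsmall (a + b) (by omega) (by omega)]
        exact Igr_mul_le a b ha hb hmm
  have key : ∀ p : Polynomial (MvPolynomial (Fin 2) ℂ),
      p ∈ Algebra.adjoin (MvPolynomial (Fin 2) ℂ)
        (Set.range fun i => Polynomial.C (c i) * Polynomial.X ^ (d i)) →
      ∀ k, p.coeff k ∈ T k := by
    intro p hp
    induction hp using Algebra.adjoin_induction with
    | mem x hx =>
      obtain ⟨i, rfl⟩ := hx
      intro k
      rw [Polynomial.coeff_C_mul, Polynomial.coeff_X_pow]
      split_ifs with h
      · rw [mul_one, h, hTsmall (d i) (by have := hd i; omega) (hdm i)]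
        exact hc i
      · rw [mul_zero]; exact zero_mem _
    | algebraMap s =>
      intro k
      have : (algebraMap (MvPolynomial (Fin 2) ℂ) (Polynomial (MvPolynomial (Fin 2) ℂ)) s)
          = Polynomial.C s := rfl
      rw [this, Polynomial.coeff_C]
      split_ifs with h
      · subst h
        have : T 0 = ⊤ := by simp [hT]
        rw [this]; trivial
      · exact zero_mem _
    | add x y hx hy ihx ihy =>
      intro k
      rw [Polynomial.coeff_add]
      exact add_mem (ihx k) (ihy k)
    | mul x y hx hy ihx ihy =>
      intro k
      rw [Polynomial.coeff_mul]
      apply sum_mem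
      rintro ⟨a, b⟩ hab
      have hab' : a + b = k := Finset.HasAntidiagonal.mem_antidiagonal.mp hab
      rcases Nat.eq_zero_or_pos a with rfl | ha
      · simp only at hab' ⊢
        subst hab'
        exact Ideal.mul_mem_left _ _ (by simpa using ihy (0 + b))
      · rcases Nat.eq_zero_or_pos b with rfl | hb
        · simp only at hab' ⊢
          subst hab'
          exact Ideal.mul_mem_right _ _ (by simpa using ihx (a + 0))
        · rw [← hab']
          exact hTmul a b ha hb _ (ihx a) _ (ihy b)
  have := key _ hmem m
  rw [Polynomial.coeff_C_mul, Polynomial.coeff_X_pow, if_pos rfl, mul_one, hTm] at this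
  exact xy_notMem_K this
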